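/- arXiv:1305.6957 — 2 statements merged into one kernel-verified Lean document; each statement's English description precedes it below -/
import Mathlib

section
/- Let F ∈ S_d be a form and let e ≤ d. A point [l] ∈ P(S_1) is a base point of the linear system (F^⊥)_e (i.e., every degree-e element of F^⊥ vanishes at [l]) if and only if there exists a differential operator ∂ ∈ S*_{d-e} such that ∂ F = l^e. -/
open MvPolynomial

noncomputable section WaringSetup

variable {k : Type} [Field k] {n : ℕ}

/-- The linear form `∑ aᵢ xᵢ` with coefficient vector `a`. -/
def linForm (a : Fin n → k) : MvPolynomial (Fin n) k :=
  ∑ i, C (a i) * X i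

/-- A subset of the space `S₁` of linear forms (identified with the space of coefficient
vectors) is homogeneous Zariski closed if it is the common zero locus of a set of
homogeneous polynomial functions. -/
def HomZariskiClosed (V : Set (Fin n → k)) : Prop :=
  ∃ P : Set (MvPolynomial (Fin n) k),
    (∀ p ∈ P, ∃ e : ℕ, p.IsHomogeneous e) ∧
    V = {a | ∀ p ∈ P, eval a p = 0}

/-- `F` can be written as a polynomial in `m` linear forms. -/
def WritableIn (m : ℕ) (F : MvPolynomial (Fin n) k) : Prop :=
  ∃ y : Fin m → MvPolynomial (Fin n) k,
    (∀ j, (y j).IsHomogeneous 1) ∧ ∃ G : MvPolynomial (Fin m) k, F = aeval y G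

/-- `F` essentially depends on `n` variables: after any linear change of coordinates it
cannot be written using fewer than `n` variables. -/
def EssDep (F : MvPolynomial (Fin n) k) : Prop :=
  ∀ m : ℕ, m < n → ¬ WritableIn m F

/-- `OrkV d F V` is the minimal number `m` such that `F` is a sum of `m` `d`-th powers of
linear forms lying outside `V` (and `⊤` if there is no such presentation). -/
def OrkV (d : ℕ) (F : MvPolynomial (Fin n) k) (V : Set (Fin n → k)) : ℕ∞ :=
  sInf ((fun m : ℕ => (m : ℕ∞)) ''
    {m : ℕ | ∃ l : Fin m → (Fin n → k), (∀ i, l i ∉ V) ∧ F = ∑ i, linForm (l i) ^ d})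

/-- The open Waring rank of a form `F`: the supremum of `OrkV d F V` over all homogeneous
Zariski-closed proper subsets `V ⊊ S₁`. -/
def Ork (d : ℕ) (F : MvPolynomial (Fin n) k) : ℕ∞ :=
  ⨆ V : {V : Set (Fin n → k) // HomZariskiClosed V ∧ V ≠ Set.univ}, OrkV d F V.1

/-- The open Waring rank `Ork(n, d)`: the supremum of `Ork F` over all forms `F` of degree
`d` essentially depending on `n` variables. -/
def OrkND (k : Type) [Field k] (n d : ℕ) : ℕ∞ :=
  ⨆ F : {F : MvPolynomial (Fin n) k // F.IsHomogeneous d ∧ EssDep F}, Ork d F.1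

/-- Apply the constant-coefficient differential operator `D` (a polynomial, whose variable
`i` is read as `∂/∂xᵢ`) to the polynomial `F`. -/
def contract (D F : MvPolynomial (Fin n) k) : MvPolynomial (Fin n) k :=
  ∑ s ∈ D.support, D.coeff s •
    ((List.finRange n).foldr (fun i G => (fun H => pderiv i H)^[s i] G) F)

/-- Polynomial functions on the affine space of polynomials: the subalgebra of functions
generated by the coefficient functionals. -/
def PolyFun (n : ℕ) (k : Type) [Field k] : Subalgebra k (MvPolynomial (Fin n) k → k) :=
  Algebra.adjoin k (Set.range fun s : Fin n →₀ ℕ => fun F => coeff s F)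

end WaringSetup

/-! The apolarity pairing `⟨D, G⟩ = (D(∂) G)(0)` on forms of degree `e` is nondegenerate (Euler's
identity lets one peel off a variable at a time), and `⟨E, lᵉ⟩ = e! E(l)`. Since
`⟨E, D(∂)F⟩ = ⟨D, E(∂)F⟩`, the orthogonal of the image of `D ↦ D(∂)F` from degree `d - e` is
`(F^⊥)ₑ`, so `lᵉ` lies in that image iff it is orthogonal to `(F^⊥)ₑ`, i.e. iff every element of
`(F^⊥)ₑ` vanishes at `l`. -/

theorem MvPolynomial.IsHomogeneous.induction_on_sum_X_mul {σ R : Type*} [Fintype σ] [Field R]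
    [CharZero R] {motive : ℕ → MvPolynomial σ R → Prop} (C : ∀ c, motive 0 (C c))
    (sum_X_mul : ∀ p (E : σ → MvPolynomial σ R), (∀ i, (E i).IsHomogeneous p) →
      (∀ i, motive p (E i)) → motive (p + 1) (∑ i, X i * E i))
    {p : ℕ} {D : MvPolynomial σ R} (hD : D.IsHomogeneous p) : motive p D := by
  induction p generalizing D with
  | zero =>
    rw [← totalDegree_zero_iff_isHomogeneous, totalDegree_eq_zero_iff_eq_C] at hD
    exact hD ▸ C _
  | succ p ih =>
    have hp : ((p + 1 : ℕ) : R) ≠ 0 := Nat.cast_ne_zero.mpr p.succ_ne_zero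
    -- Euler's identity splits `D` as `∑ Xᵢ Eᵢ` with `Eᵢ = ∂ᵢD / (p + 1)`.
    have hE : ∀ i, (MvPolynomial.C ((p + 1 : ℕ) : R)⁻¹ * pderiv i D).IsHomogeneous p :=
      fun i => hD.pderiv.C_mul _
    convert sum_X_mul p _ hE fun i => ih (hE i)
    calc D = MvPolynomial.C ((p + 1 : ℕ) : R)⁻¹ * ((p + 1) • D) := by
          rw [nsmul_eq_mul, ← map_natCast MvPolynomial.C, ← mul_assoc, ← map_mul,
            inv_mul_cancel₀ hp, map_one, one_mul]
      _ = ∑ i, X i * (MvPolynomial.C ((p + 1 : ℕ) : R)⁻¹ * pderiv i D) := by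
          rw [← hD.sum_X_mul_pderiv, Finset.mul_sum]
          exact Finset.sum_congr rfl fun i _ => mul_left_comm _ _ _

section DoubleOrthogonal

open Module

variable {K M : Type*} [Field K] [AddCommGroup M] [Module K M]

theorem LinearMap.surjective_of_injective_flip [FiniteDimensional K M]
    (B : M →ₗ[K] M →ₗ[K] K) (hB : Function.Injective B.flip) : Function.Surjective B := by
  have hsurj : Function.Surjective B.flip :=
    (LinearMap.injective_iff_surjective_of_finrank_eq_finrank
      Subspace.dual_finrank_eq.symm).mp hB
  refine (LinearMap.injective_iff_surjective_of_finrank_eq_finrank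
    Subspace.dual_finrank_eq.symm).mp fun y z hyz => ?_
  rw [← sub_eq_zero, ← forall_dual_apply_eq_zero_iff K]
  intro f
  obtain ⟨x, rfl⟩ := hsurj f
  simp [LinearMap.congr_fun hyz x]

theorem Submodule.mem_iff_forall_orthogonal_apply_eq_zero (B : M →ₗ[K] M →ₗ[K] K)
    {W U : Submodule K M} [FiniteDimensional K W]
    (hB : ∀ x ∈ W, (∀ y ∈ W, B y x = 0) → x = 0) (hUW : U ≤ W) {x : M} (hx : x ∈ W) :
    x ∈ U ↔ ∀ y ∈ W, (∀ u ∈ U, B y u = 0) → B y x = 0 := by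
  refine ⟨fun hxU y _ hy => hy x hxU, fun h => ?_⟩
  have hsurj := (B.compl₁₂ W.subtype W.subtype).surjective_of_injective_flip <| by
    rw [← LinearMap.ker_eq_bot, LinearMap.ker_eq_bot']
    exact fun x' hx' => Subtype.ext <| hB x' x'.2 fun y hy => LinearMap.congr_fun hx' ⟨y, hy⟩
  suffices (⟨x, hx⟩ : W) ∈ U.comap W.subtype from this
  rw [← Subspace.forall_mem_dualAnnihilator_apply_eq_zero_iff]
  intro f hf
  obtain ⟨y, rfl⟩ := hsurj f
  exact h y y.2 fun u hu => (Submodule.mem_dualAnnihilator _).mp hf ⟨u, hUW hu⟩ hu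

end DoubleOrthogonal

noncomputable section Contraction

open scoped IsMulCommutative

variable {k : Type} [Field k] {n : ℕ}

lemma pderiv_pderiv_comm (i j : Fin n) (p : MvPolynomial (Fin n) k) :
    pderiv i (pderiv j p) = pderiv j (pderiv i p) := by
  induction p using MvPolynomial.induction_on' with
  | monomial u c =>
    by_cases h : i = j
    · subst h; rfl
    · simp only [pderiv_monomial, Finsupp.tsub_apply, Finsupp.single_apply, if_neg h,
        if_neg (Ne.symm h), Nat.sub_zero, tsub_tsub, add_comm (Finsupp.single i 1)]
      ring_nf
  | add p q hp hq => simp only [map_add, hp, hq]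

variable (k n) in
def diffOpAlgebra : Subalgebra k (Module.End k (MvPolynomial (Fin n) k)) :=
  Algebra.adjoin k (Set.range fun i => (pderiv i).toLinearMap)

instance : IsMulCommutative (diffOpAlgebra k n) :=
  Algebra.isMulCommutative_adjoin k <| by
    rintro _ ⟨i, rfl⟩ _ ⟨j, rfl⟩
    exact LinearMap.ext fun p => pderiv_pderiv_comm i j p

variable (k n) in
/-- `D ↦ D(∂)`: evaluation at the partial derivatives, which commute and hence generate a
commutative algebra of operators. -/
def contractHom : MvPolynomial (Fin n) k →ₐ[k] Module.End k (MvPolynomial (Fin n) k) :=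
  (diffOpAlgebra k n).val.comp <| aeval fun i =>
    ⟨(pderiv i).toLinearMap, Algebra.subset_adjoin ⟨i, rfl⟩⟩

lemma contractHom_X (i : Fin n) : contractHom k n (X i) = (pderiv i).toLinearMap := by
  simp [contractHom]

lemma list_prod_map_pderiv_pow_apply (L : List (Fin n)) (s : Fin n →₀ ℕ)
    (F : MvPolynomial (Fin n) k) :
    (L.map fun i => (pderiv i).toLinearMap ^ s i).prod F =
      L.foldr (fun i G => (fun H => pderiv i H)^[s i] G) F := by
  induction L with
  | nil => rfl
  | cons i L ih =>
    rw [List.map_cons, List.prod_cons, Module.End.mul_apply, ih, List.foldr_cons,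
      Module.End.pow_apply]
    rfl

lemma contract_eq_contractHom (D F : MvPolynomial (Fin n) k) :
    contract D F = contractHom k n D F := by
  conv_rhs => rw [D.as_sum]
  simp only [map_sum, LinearMap.coe_sum, Finset.sum_apply, contract]
  refine Finset.sum_congr rfl fun s _ => ?_
  rw [monomial_eq, Finsupp.prod_fintype _ _ (fun _ => pow_zero _), Fin.prod_univ_def, map_mul,
    map_list_prod, List.map_map, algHom_C, Module.End.mul_apply, Module.algebraMap_end_apply,
    ← list_prod_map_pderiv_pow_apply]
  simp only [Function.comp_def, map_pow, contractHom_X]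

lemma contract_X_mul (i : Fin n) (E F : MvPolynomial (Fin n) k) :
    contract (X i * E) F = contract E (pderiv i F) := by
  rw [contract_eq_contractHom, contract_eq_contractHom, mul_comm, map_mul, Module.End.mul_apply,
    contractHom_X]
  rfl

lemma contract_comm (D E F : MvPolynomial (Fin n) k) :
    contract D (contract E F) = contract E (contract D F) := by
  simp only [contract_eq_contractHom, ← Module.End.mul_apply, ← map_mul, mul_comm D]

lemma contract_C (c : k) (F : MvPolynomial (Fin n) k) : contract (C c) F = C c * F := by
  rw [contract_eq_contractHom, algHom_C, Module.algebraMap_end_apply, smul_eq_C_mul]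

lemma contract_sum {ι : Type*} (s : Finset ι) (D : ι → MvPolynomial (Fin n) k)
    (F : MvPolynomial (Fin n) k) : contract (∑ i ∈ s, D i) F = ∑ i ∈ s, contract (D i) F := by
  simp only [contract_eq_contractHom, map_sum, LinearMap.coe_sum, Finset.sum_apply]

lemma contract_C_mul_right (D : MvPolynomial (Fin n) k) (c : k) (F : MvPolynomial (Fin n) k) :
    contract D (C c * F) = C c * contract D F := by
  simp only [contract_eq_contractHom, ← smul_eq_C_mul, map_smul]

def catalecticant (F : MvPolynomial (Fin n) k) :
    MvPolynomial (Fin n) k →ₗ[k] MvPolynomial (Fin n) k :=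
  LinearMap.applyₗ F ∘ₗ (contractHom k n).toLinearMap

lemma catalecticant_apply (D F : MvPolynomial (Fin n) k) : catalecticant F D = contract D F :=
  (contract_eq_contractHom D F).symm

variable (k n) in
def apolarity : MvPolynomial (Fin n) k →ₗ[k] MvPolynomial (Fin n) k →ₗ[k] k :=
  (contractHom k n).toLinearMap.compr₂ (lcoeff k 0)

lemma apolarity_apply (D G : MvPolynomial (Fin n) k) :
    apolarity k n D G = coeff 0 (contract D G) := by
  rw [contract_eq_contractHom]; rfl

lemma linForm_isHomogeneous (a : Fin n → k) : (linForm a).IsHomogeneous 1 :=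
  IsHomogeneous.sum _ _ _ fun _ _ => isHomogeneous_C_mul_X _ _

lemma pderiv_linForm (a : Fin n → k) (i : Fin n) : pderiv i (linForm a) = C (a i) := by
  simp [linForm, pderiv_X, Pi.single_apply]

variable [CharZero k]

theorem MvPolynomial.IsHomogeneous.contract {D F : MvPolynomial (Fin n) k} {p m : ℕ}
    (hD : D.IsHomogeneous p) (hF : F.IsHomogeneous m) : (contract D F).IsHomogeneous (m - p) := by
  refine hD.induction_on_sum_X_mul (motive := fun p D => ∀ {m F}, F.IsHomogeneous m →
    (_root_.contract D F).IsHomogeneous (m - p)) (fun c m F hF => ?_) (fun p E _ ih m F hF => ?_) hF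
  · simpa [contract_C] using hF.C_mul c
  · simp only [contract_sum, contract_X_mul]
    exact IsHomogeneous.sum _ _ _ fun i _ => by
      simpa only [Nat.sub_sub, add_comm 1 p] using ih i hF.pderiv

lemma contract_linForm_pow {E : MvPolynomial (Fin n) k} {e : ℕ} (hE : E.IsHomogeneous e)
    (a : Fin n → k) : contract E (linForm a ^ e) = C (e.factorial * eval a E) := by
  refine hE.induction_on_sum_X_mul (motive := fun e E =>
    contract E (linForm a ^ e) = C (e.factorial * eval a E)) (fun c => ?_) (fun p E _ ih => ?_)
  · simp [contract_C]
  · have hderiv : ∀ i, pderiv i (linForm a ^ (p + 1)) = C ((p + 1) * a i) * linForm a ^ p := by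
      intro i
      rw [pderiv_pow, pderiv_linForm, add_tsub_cancel_right, map_mul, map_add, map_natCast,
        map_one]
      push_cast
      ring
    simp only [contract_sum, contract_X_mul, hderiv, contract_C_mul_right, ih, ← map_mul,
      map_sum, eval_mul, eval_X, Finset.mul_sum, Nat.factorial_succ]
    refine Finset.sum_congr rfl fun i _ => congrArg C ?_
    push_cast
    ring

theorem MvPolynomial.IsHomogeneous.eq_zero_of_forall_apolarity_eq_zero
    {G : MvPolynomial (Fin n) k} {m : ℕ} (hG : G.IsHomogeneous m)
    (h : ∀ D : MvPolynomial (Fin n) k, D.IsHomogeneous m → apolarity k n D G = 0) : G = 0 := by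
  simp only [apolarity_apply] at h
  induction m generalizing G with
  | zero =>
    rw [← totalDegree_zero_iff_isHomogeneous, totalDegree_eq_zero_iff_eq_C] at hG
    have h0 := h (C 1) (isHomogeneous_C _ _)
    rw [contract_C, map_one, one_mul, hG, coeff_zero_C] at h0
    rw [hG, h0, map_zero]
  | succ m ih =>
    have hderiv : ∀ i, pderiv i G = 0 := fun i => ih hG.pderiv fun D hD => by
      have hXD : (X i * D).IsHomogeneous (m + 1) := by
        rw [add_comm]; exact (isHomogeneous_X k i).mul hD
      rw [← h _ hXD, contract_X_mul]
    have hEuler := hG.sum_X_mul_pderiv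
    simp only [hderiv, mul_zero, Finset.sum_const_zero] at hEuler
    exact (smul_eq_zero.mp hEuler.symm).resolve_left (Nat.succ_ne_zero m)

lemma forall_apolarity_map_catalecticant_eq_zero_iff {y F : MvPolynomial (Fin n) k} {m : ℕ}
    (hyF : (contract y F).IsHomogeneous m) :
    (∀ u ∈ (homogeneousSubmodule (Fin n) k m).map (catalecticant F), apolarity k n y u = 0) ↔
      contract y F = 0 := by
  simp only [Submodule.mem_map, mem_homogeneousSubmodule, forall_exists_index, and_imp,
    forall_apply_eq_imp_iff₂, apolarity_apply, catalecticant_apply, contract_comm y]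
  refine ⟨fun h => hyF.eq_zero_of_forall_apolarity_eq_zero fun D hD => by
    rw [apolarity_apply]; exact h D hD, fun h D _ => ?_⟩
  rw [h, contract_eq_contractHom, map_zero, coeff_zero]

end Contraction

theorem stmt_12_general (k : Type) [Field k] [CharZero k]
    (n d e : ℕ) (hed : e ≤ d)
    (F : MvPolynomial (Fin n) k) (hF : F.IsHomogeneous d)
    (a : Fin n → k) :
    (∀ D : MvPolynomial (Fin n) k, D.IsHomogeneous e → contract D F = 0 → eval a D = 0)
      ↔ ∃ D : MvPolynomial (Fin n) k,
          D.IsHomogeneous (d - e) ∧ contract D F = linForm a ^ e := by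
  set W := homogeneousSubmodule (Fin n) k e
  set U := (homogeneousSubmodule (Fin n) k (d - e)).map (catalecticant F)
  have : FiniteDimensional k W := Module.Finite.iff_fg.mpr (homogeneousSubmodule_fg _ _ _)
  have hUW : U ≤ W := by
    rintro _ ⟨D, hD, rfl⟩
    rw [catalecticant_apply, mem_homogeneousSubmodule, ← Nat.sub_sub_self hed]
    exact hD.contract hF
  have hnondeg : ∀ x ∈ W, (∀ y ∈ W, apolarity k n y x = 0) → x = 0 := fun x hx =>
    MvPolynomial.IsHomogeneous.eq_zero_of_forall_apolarity_eq_zero hx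
  have hpow : linForm a ^ e ∈ W :=
    (mem_homogeneousSubmodule _ _).mpr <| by
      simpa only [one_mul] using (linForm_isHomogeneous a).pow e
  calc _ ↔ ∀ y ∈ W, (∀ u ∈ U, apolarity k n y u = 0) → apolarity k n y (linForm a ^ e) = 0 := by
        refine forall₂_congr fun y hy => ?_
        rw [forall_apolarity_map_catalecticant_eq_zero_iff (hy.contract hF), apolarity_apply,
          contract_linForm_pow hy, coeff_zero_C, mul_eq_zero,
          or_iff_right (Nat.cast_ne_zero.mpr e.factorial_ne_zero)]
    _ ↔ linForm a ^ e ∈ U :=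
        (Submodule.mem_iff_forall_orthogonal_apply_eq_zero _ hnondeg hUW hpow).symm
    _ ↔ _ := by simp only [U, Submodule.mem_map, catalecticant_apply, mem_homogeneousSubmodule]

/-- Let `F ∈ S_d` and `e ≤ d`. A point `[l] ∈ ℙ(S₁)` is a base point of the linear
system `(F^⊥)_e` iff there is a differential operator `∂ ∈ S*_{d-e}` with `∂F = l^e`. -/
theorem stmt_12 (k : Type) [Field k] [IsAlgClosed k] [CharZero k]
    (n d e : ℕ) (hed : e ≤ d)
    (F : MvPolynomial (Fin n) k) (hF : F.IsHomogeneous d)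
    (a : Fin n → k) (ha : a ≠ 0) :
    (∀ D : MvPolynomial (Fin n) k, D.IsHomogeneous e → contract D F = 0 → eval a D = 0)
      ↔ ∃ D : MvPolynomial (Fin n) k,
          D.IsHomogeneous (d - e) ∧ contract D F = linForm a ^ e :=
  stmt_12_general k n d e hed F hF a
end

section
/- The classical Waring rank of the ternary cubic x_0 x_1² + x_1 x_2² is exactly 5; in particular, it cannot be written as a sum of fewer than 5 cubes of linear forms, and it is a sum of 5 cubes of linear forms. -/
open MvPolynomial

/-!
A decomposition `F = ∑ⱼ ℓⱼ³` of `F = x₀x₁² + x₁x₂²` polarizes to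
`∑ⱼ ℓⱼ(u) ℓⱼ(v) ℓⱼ(w) = Φ(u, v, w)`, `Φ` the polar form of `F`. So the map `t ↦ ∑ⱼ tⱼ ℓⱼ`
from `kᵐ` to `k³` reaches every second partial of `F`, hence is onto, and it kills
`(ℓⱼ(u) ℓⱼ(v))ⱼ` whenever `∂ᵤ∂ᵥF = 0`. Writing `a, b, c` for the columns of coefficients of
`x₀, x₁, x₂`, this puts `a²` and `ac` in the kernel; for `m ≤ 4` the kernel is a line, so
`ac = μa²` and `a`, `c - μa` have disjoint supports. But `∑ a³ = ∑ a²b = 0 ≠ ∑ ab²` needs at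
least three nonzero `aⱼ`, and `∑ (c - μa)³ = 0 ≠ ∑ b(c - μa)²` at least two nonzero `cⱼ - μaⱼ`.
-/

open Matrix Finset Module

section Polarization

variable {R ι n : Type*} [CommRing R] [Fintype ι] [Fintype n]

theorem six_mul_sum_mulVec_mul_mulVec_mul_mulVec (ℓ : Matrix ι n R) (u v w : n → R) :
    6 * ∑ j, (ℓ *ᵥ u) j * (ℓ *ᵥ v) j * (ℓ *ᵥ w) j =
      ∑ j, (ℓ *ᵥ (u + v + w)) j ^ 3 - ∑ j, (ℓ *ᵥ (u + v)) j ^ 3 - ∑ j, (ℓ *ᵥ (u + w)) j ^ 3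
        - ∑ j, (ℓ *ᵥ (v + w)) j ^ 3 + ∑ j, (ℓ *ᵥ u) j ^ 3 + ∑ j, (ℓ *ᵥ v) j ^ 3
        + ∑ j, (ℓ *ᵥ w) j ^ 3 := by
  simp only [mulVec_add, Pi.add_apply, mul_sum, ← sum_add_distrib, ← sum_sub_distrib]
  exact sum_congr rfl fun j _ => by ring

theorem vecMul_mulVec_mul_mulVec_apply [DecidableEq n] (ℓ : Matrix ι n R) (u v : n → R) (i : n) :
    (((ℓ *ᵥ u) * (ℓ *ᵥ v)) ᵥ* ℓ) i = ∑ j, (ℓ *ᵥ u) j * (ℓ *ᵥ v) j * (ℓ *ᵥ Pi.single i 1) j := by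
  simp [vecMul, dotProduct]

end Polarization

section SmallSupport

variable {R ι : Type*} [CommRing R] [IsDomain R] [Fintype ι]

theorem mul_sq_add_mul_sq_eq_zero {a₁ a₂ b₁ b₂ : R} (h₃ : a₁ ^ 3 + a₂ ^ 3 = 0)
    (h₂ : a₁ ^ 2 * b₁ + a₂ ^ 2 * b₂ = 0) : a₁ * b₁ ^ 2 + a₂ * b₂ ^ 2 = 0 := by
  have key : a₂ ^ 3 * (a₁ * b₁ ^ 2 + a₂ * b₂ ^ 2) = 0 := by
    linear_combination (a₂ ^ 2 * b₂ - a₁ ^ 2 * b₁) * h₂ + a₁ * b₁ ^ 2 * h₃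
  rcases mul_eq_zero.mp key with h | h
  · have ha₂ : a₂ = 0 := pow_eq_zero_iff three_ne_zero |>.mp h
    have ha₁ : a₁ = 0 := pow_eq_zero_iff three_ne_zero |>.mp (by linear_combination h₃ - h)
    simp [ha₁, ha₂]
  · exact h

variable [DecidableEq R]

theorem sum_mul_mul_eq_zero_of_card_support_le_two {a b : ι → R} (ha : #{j | a j ≠ 0} ≤ 2)
    (h₃ : ∑ j, a j * a j * a j = 0) (h₂ : ∑ j, a j * a j * b j = 0) :
    ∑ j, a j * b j * b j = 0 := by
  have hsupp : ∀ f : ι → R, (∀ j, a j = 0 → f j = 0) → ∑ j ∈ {j | a j ≠ 0}, f j = ∑ j, f j :=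
    fun f hf => sum_filter_of_ne fun j _ => mt (hf j)
  rw [← hsupp _ (by simp +contextual)] at h₃ h₂ ⊢
  rcases (by omega : #{j | a j ≠ 0} = 0 ∨ #{j | a j ≠ 0} = 1 ∨ #{j | a j ≠ 0} = 2)
    with hs | hs | hs
  · simp [card_eq_zero.mp hs]
  · obtain ⟨x, hx⟩ := card_eq_one.mp hs
    simp only [hx, sum_singleton] at h₃ ⊢
    simp [pow_eq_zero_iff three_ne_zero |>.mp (by linear_combination h₃ : a x ^ 3 = 0)]
  · classical
    obtain ⟨x, y, hxy, hx⟩ := card_eq_two.mp hs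
    simp only [hx, sum_pair hxy] at h₃ h₂ ⊢
    linear_combination mul_sq_add_mul_sq_eq_zero (a₁ := a x) (a₂ := a y) (b₁ := b x) (b₂ := b y)
      (by linear_combination h₃) (by linear_combination h₂)

theorem sum_mul_mul_eq_zero_of_card_support_le_one {b c : ι → R} (hc : #{j | c j ≠ 0} ≤ 1)
    (h₃ : ∑ j, c j * c j * c j = 0) : ∑ j, b j * c j * c j = 0 := by
  have hsupp : ∀ f : ι → R, (∀ j, c j = 0 → f j = 0) → ∑ j ∈ {j | c j ≠ 0}, f j = ∑ j, f j :=
    fun f hf => sum_filter_of_ne fun j _ => mt (hf j)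
  rw [← hsupp _ (by simp +contextual)] at h₃ ⊢
  rcases (by omega : #{j | c j ≠ 0} = 0 ∨ #{j | c j ≠ 0} = 1) with hs | hs
  · simp [card_eq_zero.mp hs]
  · obtain ⟨x, hx⟩ := card_eq_one.mp hs
    simp only [hx, sum_singleton] at h₃ ⊢
    simp [pow_eq_zero_iff three_ne_zero |>.mp (by linear_combination h₃ : c x ^ 3 = 0)]

end SmallSupport

section Cubic

variable {k : Type} [Field k]

theorem eval_linForm {n : ℕ} (a v : Fin n → k) : eval v (linForm a) = a ⬝ᵥ v := by
  simp [linForm, dotProduct]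

/-- The symmetric trilinear form whose restriction to the diagonal is `x₀x₁² + x₁x₂²`. -/
def cubicPolar (u v w : Fin 3 → k) : k :=
  (u 0 * v 1 * w 1 + u 1 * v 0 * w 1 + u 1 * v 1 * w 0 + u 1 * v 2 * w 2 + u 2 * v 1 * w 2 +
    u 2 * v 2 * w 1) / 3

variable {ι : Type} [Fintype ι] {ℓ : Matrix ι (Fin 3) k}

theorem sum_mulVec_mul_mulVec_mul_mulVec_eq_cubicPolar [CharZero k]
    (h : (X 0 * X 1 ^ 2 + X 1 * X 2 ^ 2 : MvPolynomial (Fin 3) k) = ∑ i, linForm (ℓ i) ^ 3)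
    (u v w : Fin 3 → k) :
    ∑ j, (ℓ *ᵥ u) j * (ℓ *ᵥ v) j * (ℓ *ᵥ w) j = cubicPolar u v w := by
  have hcube : ∀ x : Fin 3 → k, ∑ j, (ℓ *ᵥ x) j ^ 3 = x 0 * x 1 ^ 2 + x 1 * x 2 ^ 2 := fun x => by
    simpa [eval_linForm, mulVec] using (congrArg (eval x) h).symm
  have h6 := six_mul_sum_mulVec_mul_mulVec_mul_mulVec ℓ u v w
  simp only [hcube, Pi.add_apply] at h6
  unfold cubicPolar
  linear_combination h6 / 6

theorem vecMul_mulVec_mul_mulVec_apply_eq_cubicPolar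
    (hℓ : ∀ u v w, ∑ j, (ℓ *ᵥ u) j * (ℓ *ᵥ v) j * (ℓ *ᵥ w) j = cubicPolar u v w)
    (u v : Fin 3 → k) (i : Fin 3) :
    (((ℓ *ᵥ u) * (ℓ *ᵥ v)) ᵥ* ℓ) i = cubicPolar u v (Pi.single i 1) := by
  rw [vecMul_mulVec_mul_mulVec_apply, hℓ]

theorem vecMulLinear_surjective_of_cubicPolar [CharZero k]
    (hℓ : ∀ u v w, ∑ j, (ℓ *ᵥ u) j * (ℓ *ᵥ v) j * (ℓ *ᵥ w) j = cubicPolar u v w) :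
    Function.Surjective ℓ.vecMulLinear := by
  intro y
  let e : Fin 3 → Fin 3 → k := fun i => Pi.single i 1
  refine ⟨(3 * y 0) • ((ℓ *ᵥ e 1) * (ℓ *ᵥ e 1)) + (3 * y 1) • ((ℓ *ᵥ e 0) * (ℓ *ᵥ e 1)) +
    (3 * y 2) • ((ℓ *ᵥ e 1) * (ℓ *ᵥ e 2)), ?_⟩
  ext i
  have h₀ := vecMul_mulVec_mul_mulVec_apply_eq_cubicPolar hℓ (e 1) (e 1) i
  have h₁ := vecMul_mulVec_mul_mulVec_apply_eq_cubicPolar hℓ (e 0) (e 1) i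
  have h₂ := vecMul_mulVec_mul_mulVec_apply_eq_cubicPolar hℓ (e 1) (e 2) i
  simp only [map_add, map_smul, coe_vecMulLinear, Pi.add_apply, Pi.smul_apply, smul_eq_mul]
  linear_combination (norm := skip) 3 * y 0 * h₀ + 3 * y 1 * h₁ + 3 * y 2 * h₂
  fin_cases i <;> simp [e, cubicPolar] <;> ring

theorem mulVec_mul_mulVec_mem_ker_vecMulLinear
    (hℓ : ∀ u v w, ∑ j, (ℓ *ᵥ u) j * (ℓ *ᵥ v) j * (ℓ *ᵥ w) j = cubicPolar u v w)
    {u v : Fin 3 → k} (huv : ∀ i, cubicPolar u v (Pi.single i 1) = 0) :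
    (ℓ *ᵥ u) * (ℓ *ᵥ v) ∈ LinearMap.ker ℓ.vecMulLinear := by
  ext i
  simp only [coe_vecMulLinear, Pi.zero_apply]
  rw [vecMul_mulVec_mul_mulVec_apply_eq_cubicPolar hℓ, huv]

theorem exists_smul_mulVec_mul_mulVec_eq [CharZero k]
    (hℓ : ∀ u v w, ∑ j, (ℓ *ᵥ u) j * (ℓ *ᵥ v) j * (ℓ *ᵥ w) j = cubicPolar u v w)
    (hcard : Fintype.card ι ≤ 4) :
    ∃ μ : k, μ • ((ℓ *ᵥ Pi.single 0 1) * (ℓ *ᵥ Pi.single 0 1)) =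
      (ℓ *ᵥ Pi.single 0 1) * (ℓ *ᵥ Pi.single 2 1) := by
  set a := ℓ *ᵥ Pi.single 0 1
  have hker : finrank k (LinearMap.ker ℓ.vecMulLinear) ≤ 1 := by
    have := LinearMap.finrank_range_add_finrank_ker ℓ.vecMulLinear
    rw [LinearMap.range_eq_top.mpr (vecMulLinear_surjective_of_cubicPolar hℓ), finrank_top] at this
    simp only [finrank_fintype_fun_eq_card, Fintype.card_fin] at this
    omega
  have haa : a * a ∈ LinearMap.ker ℓ.vecMulLinear :=
    mulVec_mul_mulVec_mem_ker_vecMulLinear hℓ fun i => by fin_cases i <;> simp [cubicPolar]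
  have hac : a * (ℓ *ᵥ Pi.single 2 1) ∈ LinearMap.ker ℓ.vecMulLinear :=
    mulVec_mul_mulVec_mem_ker_vecMulLinear hℓ fun i => by fin_cases i <;> simp [cubicPolar]
  have haa_ne : (⟨a * a, haa⟩ : LinearMap.ker ℓ.vecMulLinear) ≠ 0 := by
    intro haa0
    have ha0 : ∀ j, a j = 0 := fun j =>
      mul_self_eq_zero.mp (congrFun (congrArg Subtype.val haa0) j)
    have hab : ∑ j, a j * (ℓ *ᵥ Pi.single 1 1) j * (ℓ *ᵥ Pi.single 1 1) j = 1 / 3 :=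
      (hℓ _ _ _).trans (by simp [cubicPolar])
    simp [ha0] at hab
  have hone : finrank k (LinearMap.ker ℓ.vecMulLinear) = 1 :=
    le_antisymm hker (finrank_pos_iff_exists_ne_zero.mpr ⟨_, haa_ne⟩)
  obtain ⟨μ, hμ⟩ := (finrank_eq_one_iff_of_nonzero' _ haa_ne).mp hone ⟨_, hac⟩
  exact ⟨μ, congrArg Subtype.val hμ⟩

theorem five_le_card_of_eq_sum_cubes [CharZero k]
    (h : (X 0 * X 1 ^ 2 + X 1 * X 2 ^ 2 : MvPolynomial (Fin 3) k) = ∑ i, linForm (ℓ i) ^ 3) :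
    5 ≤ Fintype.card ι := by
  classical
  have hℓ := sum_mulVec_mul_mulVec_mul_mulVec_eq_cubicPolar h
  by_contra! hcard
  obtain ⟨μ, hμ⟩ := exists_smul_mulVec_mul_mulVec_eq hℓ (by omega)
  set a := ℓ *ᵥ Pi.single 0 1
  set b := ℓ *ᵥ Pi.single 1 1
  set c' := ℓ *ᵥ (Pi.single 2 1 - μ • Pi.single 0 1)
  let s : Finset ι := {j | a j ≠ 0}
  let t : Finset ι := {j | c' j ≠ 0}
  have hdisj : Disjoint s t := by
    refine disjoint_filter.mpr fun j _ ha hc' => hc' ?_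
    have hj := congrFun hμ j
    simp only [Pi.smul_apply, Pi.mul_apply, smul_eq_mul] at hj
    have : a j * c' j = 0 := by
      simp only [c', mulVec_sub, mulVec_smul, Pi.sub_apply, Pi.smul_apply, smul_eq_mul]
      linear_combination -hj
    exact (mul_eq_zero.mp this).resolve_left ha
  have hst : #s + #t ≤ 4 := by
    have := card_le_univ (s ∪ t)
    rw [card_union_of_disjoint hdisj] at this
    omega
  rcases (by omega : #s ≤ 2 ∨ #t ≤ 1) with hs | ht
  · have hab : ∑ j, a j * b j * b j = 1 / 3 := (hℓ _ _ _).trans (by simp [cubicPolar])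
    rw [sum_mul_mul_eq_zero_of_card_support_le_two hs ((hℓ _ _ _).trans (by simp [cubicPolar]))
      ((hℓ _ _ _).trans (by simp [cubicPolar]))] at hab
    norm_num at hab
  · have hbc' : ∑ j, b j * c' j * c' j = 1 / 3 := (hℓ _ _ _).trans (by simp [cubicPolar])
    rw [sum_mul_mul_eq_zero_of_card_support_le_one ht
      ((hℓ _ _ _).trans (by simp [cubicPolar]))] at hbc'
    norm_num at hbc'

theorem linForm_fin_three (a : Fin 3 → k) :
    linForm a = C (a 0) * X 0 + C (a 1) * X 1 + C (a 2) * X 2 := by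
  simp [linForm, Fin.sum_univ_three]

theorem exists_eq_sum_five_cubes [IsAlgClosed k] [CharZero k] :
    ∃ l : Fin 5 → Fin 3 → k,
      (X 0 * X 1 ^ 2 + X 1 * X 2 ^ 2 : MvPolynomial (Fin 3) k) = ∑ i, linForm (l i) ^ 3 := by
  obtain ⟨i, hi⟩ := IsAlgClosed.exists_pow_nat_eq (-1 : k) two_pos
  obtain ⟨r, hr⟩ := IsAlgClosed.exists_pow_nat_eq (-(1 / 3) : k) three_pos
  obtain ⟨s, hs⟩ := IsAlgClosed.exists_pow_nat_eq (1 / 12 : k) three_pos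
  -- `(x₀ + x₁ ± x₂)³ + (x₀ - x₁ ± i x₂)³` sum to `4 x₀³ + 12 (x₀x₁² + x₁x₂²)`
  refine ⟨![![r, 0, 0], ![s, s, s], ![s, s, -s], ![s, -s, s * i], ![s, -s, -(s * i)]], ?_⟩
  have hi' : C i ^ 2 = (-1 : MvPolynomial (Fin 3) k) := by
    rw [← map_pow, hi, map_neg, map_one]
  have hrs : C r ^ 3 + 4 * C s ^ 3 = (0 : MvPolynomial (Fin 3) k) := by
    rw [← map_pow, ← map_pow, ← map_ofNat C 4, ← map_mul, ← map_add, hr, hs]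
    norm_num
  have hs' : 12 * C s ^ 3 = (1 : MvPolynomial (Fin 3) k) := by
    rw [← map_pow, ← map_ofNat C 12, ← map_mul, hs]
    norm_num
  simp only [Fin.sum_univ_five, linForm_fin_three, cons_val_zero, cons_val_one, cons_val_two,
    cons_val_three, cons_val_four, head_cons, tail_cons, map_zero, map_neg, map_mul]
  linear_combination -X 0 ^ 3 * hrs - (X 0 * X 1 ^ 2 + X 1 * X 2 ^ 2) * hs'
    - 6 * C s ^ 3 * X 2 ^ 2 * (X 0 - X 1) * hi'

end Cubic

/-- The classical Waring rank of the ternary cubic `x₀x₁² + x₁x₂²` is exactly `5`. -/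
theorem stmt_17 (k : Type) [Field k] [IsAlgClosed k] [CharZero k] :
    IsLeast {m : ℕ | ∃ l : Fin m → (Fin 3 → k),
      (X 0 * X 1 ^ 2 + X 1 * X 2 ^ 2 : MvPolynomial (Fin 3) k)
        = ∑ i, linForm (l i) ^ 3} 5 :=
  ⟨exists_eq_sum_five_cubes, fun m ⟨l, hl⟩ => by
    simpa using five_le_card_of_eq_sum_cubes (ℓ := l) hl⟩
end
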